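/- arXiv:2210.07086 — 6 statements merged into one kernel-verified Lean document; each statement's English description precedes it below -/
import Mathlib

section
/- Under the stated hypotheses, for every x > 0 the Bochner integral R_x = ∫_x^∞ exp(−tA)·B·C·exp(−tA) dt converges; the map x ↦ R_x is differentiable with derivative dR_x/dx = −exp(−xA)·B·C·exp(−xA); and R_x satisfies the Lyapunov equation A·R_x + R_x·A = exp(−xA)·B·C·exp(−xA). -/
open MeasureTheory

/-- The semigroup `exp(-tA)` generated by a bounded operator `A`. -/
noncomputable def expA {H : Type*} [NormedAddCommGroup H] [InnerProductSpace ℂ H]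
    [CompleteSpace H] (A : H →L[ℂ] H) (t : ℝ) : H →L[ℂ] H :=
  NormedSpace.exp ((-(t : ℂ)) • A)

/-- `R_x = ∫_x^∞ exp(-tA)·B·C·exp(-tA) dt` as a Bochner integral, where `BC` stands for
the composite operator `B·C : H → H`. -/
noncomputable def Rop {H : Type*} [NormedAddCommGroup H] [InnerProductSpace ℂ H]
    [CompleteSpace H] (A : H →L[ℂ] H) (BC : H →L[ℂ] H) (x : ℝ) : H →L[ℂ] H :=
  ∫ t in Set.Ioi x, expA A t * BC * expA A t

/-!
`f t = exp(-tA) X exp(-tA)` solves `f' = -(A f + f A)` and decays like `exp(-2εt)`. Integrating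
`f'` over `(x, ∞)`, where `f` vanishes at infinity, gives `A R_x + R_x A = f x`; and
`R_x = R_a - ∫_a^x f` makes `R` differentiable with derivative `-f`.
-/

open Set Filter Asymptotics Topology

section Integrals

variable {E : Type*} [NormedAddCommGroup E]

theorem integrableOn_Ioi_of_isBigO_exp_neg {f : ℝ → E} {a b : ℝ} (hb : 0 < b)
    (hf : ContinuousOn f (Ici a)) (ho : f =O[atTop] fun t => Real.exp (-b * t)) :
    IntegrableOn f (Ioi a) :=
  ((hf.locallyIntegrableOn measurableSet_Ici).integrableOn_of_isBigO_atTop ho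
    ⟨Ioi b, Ioi_mem_atTop b, exp_neg_integrableOn_Ioi b hb⟩).mono_set Ioi_subset_Ici_self

theorem hasDerivAt_integral_Ioi [NormedSpace ℝ E] [CompleteSpace E] {f : ℝ → E} {a x : ℝ}
    (hf : IntegrableOn f (Ioi a)) (hax : a < x) (hcont : ContinuousAt f x) :
    HasDerivAt (fun y => ∫ t in Ioi y, f t) (-f x) x := by
  have hsplit : ∀ y ∈ Ioi a, ∫ t in Ioi y, f t = (∫ t in Ioi a, f t) - ∫ t in a..y, f t :=
    fun y hy => by rw [← intervalIntegral.integral_Ioi_sub_Ioi hf (le_of_lt hy), sub_sub_cancel]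
  have hprimitive : HasDerivAt (fun y => ∫ t in a..y, f t) (f x) x :=
    intervalIntegral.integral_hasDerivAt_right
      ((intervalIntegrable_iff_integrableOn_Ioc_of_le hax.le).2 (hf.mono_set Ioc_subset_Ioi_self))
      (AEStronglyMeasurable.stronglyMeasurableAtFilter_of_mem hf.aestronglyMeasurable
        (Ioi_mem_nhds hax)) hcont
  simpa only [zero_sub] using
    ((hasDerivAt_const x _).sub hprimitive).congr_of_eventuallyEq
      (eventually_of_mem (Ioi_mem_nhds hax) hsplit)

end Integrals

section BanachAlgebra

variable {𝔸 : Type*} [NormedRing 𝔸] [NormedAlgebra ℝ 𝔸] [CompleteSpace 𝔸]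

theorem hasDerivAt_exp_smul_neg_mul_mul (A X : 𝔸) (t : ℝ) :
    HasDerivAt (fun s : ℝ => NormedSpace.exp (s • -A) * X * NormedSpace.exp (s • -A))
      (-(A * (NormedSpace.exp (t • -A) * X * NormedSpace.exp (t • -A))
        + NormedSpace.exp (t • -A) * X * NormedSpace.exp (t • -A) * A)) t := by
  refine (((hasDerivAt_exp_smul_const' (-A) t).mul_const X).mul
    (hasDerivAt_exp_smul_const (-A) t)).congr_deriv ?_
  noncomm_ring

theorem mul_integral_Ioi_add_integral_Ioi_mul_eq_of_hasDerivAt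
    {A : 𝔸} {f : ℝ → 𝔸} {x : ℝ}
    (hderiv : ∀ t ∈ Ici x, HasDerivAt f (-(A * f t + f t * A)) t)
    (hf : IntegrableOn f (Ioi x)) :
    A * (∫ t in Ioi x, f t) + (∫ t in Ioi x, f t) * A = f x := by
  have hAf := hf.const_mul A
  have hfA := hf.mul_const A
  have hderiv_int := (hAf.add hfA).neg
  have hlim : Tendsto f atTop (𝓝 0) :=
    tendsto_zero_of_hasDerivAt_of_integrableOn_Ioi (fun t ht => hderiv t (Ioi_subset_Ici_self ht))
      hderiv_int hf
  have hftc := integral_Ioi_of_hasDerivAt_of_tendsto' hderiv hderiv_int hlim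
  rwa [integral_neg, integral_add hAf hfA, integral_const_mul_of_integrable hf,
    integral_mul_const_of_integrable hf, zero_sub, neg_inj] at hftc

end BanachAlgebra

theorem isBigO_mul_mul_of_isBigO_exp_neg {R : Type*} [NormedRing R] {F : ℝ → R} {ε : ℝ}
    (hF : F =O[atTop] fun t => Real.exp (-ε * t)) (X : R) :
    (fun t => F t * X * F t) =O[atTop] fun t => Real.exp (-(2 * ε) * t) := by
  refine ((hF.mul (isBigO_const_const X one_ne_zero atTop)).mul hF).congr_right fun t => ?_
  rw [mul_one, ← Real.exp_add]
  ring_nf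

section Semigroup

variable {H : Type*} [NormedAddCommGroup H] [InnerProductSpace ℂ H] [CompleteSpace H]

theorem expA_eq_exp_smul_neg (A : H →L[ℂ] H) (t : ℝ) :
    expA A t = NormedSpace.exp (t • -A) := by
  rw [expA, smul_neg, ← neg_smul, ← Complex.coe_smul, Complex.ofReal_neg]

theorem isBigO_expA_of_norm_le {A : H →L[ℂ] H} {M ε : ℝ}
    (hdecay : ∀ t : ℝ, 0 ≤ t → ‖expA A t‖ ≤ M * Real.exp (-ε * t)) :
    expA A =O[atTop] fun t => Real.exp (-ε * t) :=
  IsBigO.of_bound M <| (eventually_ge_atTop 0).mono fun t ht => by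
    rw [Real.norm_of_nonneg (Real.exp_pos _).le]
    exact hdecay t ht

end Semigroup

theorem Rop_integrable_hasDerivAt_lyapunov_general
    {H H₀ : Type*} [NormedAddCommGroup H] [InnerProductSpace ℂ H] [CompleteSpace H]
    [NormedAddCommGroup H₀] [InnerProductSpace ℂ H₀] [CompleteSpace H₀]
    (A : H →L[ℂ] H) (B : H₀ →L[ℂ] H) (C : H →L[ℂ] H₀)
    (M ε : ℝ) (hε : 0 < ε)
    (hdecay : ∀ t : ℝ, 0 ≤ t → ‖expA A t‖ ≤ M * Real.exp (-ε * t)) :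
    (∀ x : ℝ, 0 < x →
        IntegrableOn (fun t : ℝ => expA A t * (B ∘L C) * expA A t) (Set.Ioi x)) ∧
    (∀ x : ℝ, 0 < x →
        HasDerivAt (Rop A (B ∘L C)) (-(expA A x * (B ∘L C) * expA A x)) x) ∧
    (∀ x : ℝ, 0 < x →
        A * Rop A (B ∘L C) x + Rop A (B ∘L C) x * A = expA A x * (B ∘L C) * expA A x) := by
  set f : ℝ → H →L[ℂ] H := fun t => expA A t * (B ∘L C) * expA A t
  have hderiv : ∀ t, HasDerivAt f (-(A * f t + f t * A)) t := fun t => by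
    simpa only [f, expA_eq_exp_smul_neg] using hasDerivAt_exp_smul_neg_mul_mul A (B ∘L C) t
  have hcont : Continuous f := continuous_iff_continuousAt.2 fun t => (hderiv t).continuousAt
  have hint : ∀ a, IntegrableOn f (Ioi a) := fun a =>
    integrableOn_Ioi_of_isBigO_exp_neg (by positivity) hcont.continuousOn
      (isBigO_mul_mul_of_isBigO_exp_neg (isBigO_expA_of_norm_le hdecay) (B ∘L C))
  exact ⟨fun x _ => hint x,
    fun x _ => hasDerivAt_integral_Ioi (hint (x - 1)) (by linarith) hcont.continuousAt,
    fun x _ =>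
      mul_integral_Ioi_add_integral_Ioi_mul_eq_of_hasDerivAt (fun t _ => hderiv t) (hint x)⟩

/-- For bounded operators `A : H → H`, `B : H₀ → H`, `C : H → H₀` with
`‖exp(-tA)‖ ≤ M e^{-εt}` for `t ≥ 0`, the Bochner integral
`R_x = ∫_x^∞ exp(-tA)·B·C·exp(-tA) dt` converges for every `x > 0`, the map `x ↦ R_x` is
differentiable with derivative `-exp(-xA)·B·C·exp(-xA)`, and `R_x` satisfies the Lyapunov
equation `A·R_x + R_x·A = exp(-xA)·B·C·exp(-xA)`. -/
theorem Rop_integrable_hasDerivAt_lyapunov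
    {H H₀ : Type*} [NormedAddCommGroup H] [InnerProductSpace ℂ H] [CompleteSpace H]
    [NormedAddCommGroup H₀] [InnerProductSpace ℂ H₀] [CompleteSpace H₀]
    (A : H →L[ℂ] H) (B : H₀ →L[ℂ] H) (C : H →L[ℂ] H₀)
    (M ε : ℝ) (hM : 0 < M) (hε : 0 < ε)
    (hdecay : ∀ t : ℝ, 0 ≤ t → ‖expA A t‖ ≤ M * Real.exp (-ε * t)) :
    (∀ x : ℝ, 0 < x →
        IntegrableOn (fun t : ℝ => expA A t * (B ∘L C) * expA A t) (Set.Ioi x)) ∧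
    (∀ x : ℝ, 0 < x →
        HasDerivAt (Rop A (B ∘L C)) (-(expA A x * (B ∘L C) * expA A x)) x) ∧
    (∀ x : ℝ, 0 < x →
        A * Rop A (B ∘L C) x + Rop A (B ∘L C) x * A = expA A x * (B ∘L C) * expA A x) :=
  Rop_integrable_hasDerivAt_lyapunov_general A B C M ε hε hdecay
end

section
/- Under the stated hypotheses, suppose I + R_x is invertible for all x in an open interval J, set F_x = (I + R_x)⁻¹, and let P : J → L(H) be a differentiable operator-valued function. Then the scalar function β(x) = C(exp(−xA)·F_x·P(x)·F_x·exp(−xA)·b) is differentiable on J, with β′(x) = C(exp(−xA)·F_x·(A·(I − 2F_x)·P(x) + P′(x) + P(x)·(I − 2F_x)·A)·F_x·exp(−xA)·b); that is, the bracket intertwines d/dx with the derivation ∂P = A(I−2F_x)P + dP/dx + P(I−2F_x)A. -/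
/-!
With `e = exp(-xA)` and `K = BC`, differentiating `R_x = ∫_x^∞ exp(-tA) K exp(-tA) dt` gives
`R' = -e K e`, hence `F' = F e K e F`. Integrating `(e K e)' = -(A e K e + e K e A)` over
`(x, ∞)` gives the Lyapunov identity `A R + R A = e K e`, and since `R F = F R = 1 - F` this
rewrites `F'` as `F A (1 - F) + (1 - F) A F`. Together with `e' = -A e = -e A`, the Leibniz
rule for `e F P F e` then regroups into `e F (A (1 - 2F) P + P' + P (1 - 2F) A) F e`.
-/

open MeasureTheory Filter Set Topology

theorem HasDerivAt.ringInverse {𝕜 R : Type*} [NontriviallyNormedField 𝕜] [NormedRing R]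
    [NormedAlgebra 𝕜 R] [CompleteSpace R] {f : 𝕜 → R} {f' : R} {x : 𝕜}
    (hf : HasDerivAt f f' x) (hx : IsUnit (f x)) :
    HasDerivAt (fun y => Ring.inverse (f y))
      (-(Ring.inverse (f x) * f' * Ring.inverse (f x))) x := by
  have hinv := hasFDerivAt_ringInverse (𝕜 := 𝕜) hx.unit
  rw [hx.unit_spec, ← Ring.inverse_unit, hx.unit_spec] at hinv
  exact (hinv.comp_hasDerivAt x hf).congr_deriv (by simp)

section Algebra

variable {S : Type*} [Ring S]

theorem mul_mul_eq_of_lyapunov {A R F K : S} (hlyap : A * R + R * A = K)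
    (hRF : (1 + R) * F = 1) (hFR : F * (1 + R) = 1) :
    F * K * F = F * A * (1 - F) + (1 - F) * A * F := by
  have hRF' : R * F = 1 - F := by rw [add_mul, one_mul] at hRF; exact eq_sub_of_add_eq' hRF
  have hFR' : F * R = 1 - F := by rw [mul_add, mul_one] at hFR; exact eq_sub_of_add_eq' hFR
  calc F * K * F = F * A * (R * F) + F * R * (A * F) := by rw [← hlyap]; noncomm_ring
    _ = _ := by rw [hRF', hFR']; noncomm_ring

/-- The left side is the Leibniz rule for `(e F P F e)'` with `e' = -A e` and
`F' = F A (1 - F) + (1 - F) A F`. -/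
theorem leibniz_sandwich_eq {A e F P Q : S} (hAe : Commute A e) :
    ((((-(A * e)) * F + e * (F * A * (1 - F) + (1 - F) * A * F)) * P + e * F * Q) * F
        + e * F * P * (F * A * (1 - F) + (1 - F) * A * F)) * e + e * F * P * F * (-(A * e))
      = e * F * (A * (1 - 2 * F) * P + Q + P * (1 - 2 * F) * A) * F * e := by
  nth_rewrite 1 [hAe.eq]
  noncomm_ring

end Algebra

section Operators

variable {H : Type*} [NormedAddCommGroup H] [InnerProductSpace ℂ H] [CompleteSpace H]
  (A K : H →L[ℂ] H)

theorem commute_expA (t : ℝ) : Commute A (expA A t) :=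
  ((Commute.refl A).smul_right _).exp_right

theorem hasDerivAt_expA (t : ℝ) : HasDerivAt (expA A) (-(A * expA A t)) t := by
  have hexp : HasDerivAt (fun s : ℝ => NormedSpace.exp ((s : ℂ) • (-A)))
      (NormedSpace.exp ((t : ℂ) • (-A)) * (-A)) t :=
    ((hasDerivAt_exp_smul_const (𝕂 := ℂ) (-A) (t : ℂ)).scomp t
      Complex.ofRealCLM.hasDerivAt).congr_deriv (by simp)
  have hfun : ∀ s : ℝ, NormedSpace.exp ((s : ℂ) • (-A)) = expA A s := fun s => by
    rw [expA, smul_neg, neg_smul]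
  simp only [hfun] at hexp
  rwa [mul_neg, ← (commute_expA A t).eq] at hexp

theorem continuous_expA : Continuous (expA A) :=
  continuous_iff_continuousAt.2 fun t => (hasDerivAt_expA A t).continuousAt

theorem continuous_expA_mul_mul_expA : Continuous fun t => expA A t * K * expA A t :=
  ((continuous_expA A).mul continuous_const).mul (continuous_expA A)

theorem hasDerivAt_expA_mul_mul_expA (t : ℝ) :
    HasDerivAt (fun s => expA A s * K * expA A s)
      (-(A * (expA A t * K * expA A t) + expA A t * K * expA A t * A)) t := by
  refine (((hasDerivAt_expA A t).mul_const K).mul (hasDerivAt_expA A t)).congr_deriv ?_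
  nth_rewrite 2 [(commute_expA A t).eq]
  noncomm_ring

section Decay

variable {A} {M ε : ℝ} (hdecay : ∀ t : ℝ, 0 ≤ t → ‖expA A t‖ ≤ M * Real.exp (-ε * t))
include hdecay

theorem norm_expA_mul_mul_expA_le {t : ℝ} (ht : 0 ≤ t) :
    ‖expA A t * K * expA A t‖ ≤ M ^ 2 * ‖K‖ * Real.exp (-(2 * ε) * t) := by
  have hbound := hdecay t ht
  have hM : 0 ≤ M * Real.exp (-ε * t) := (norm_nonneg _).trans hbound
  calc ‖expA A t * K * expA A t‖ ≤ ‖expA A t‖ * ‖K‖ * ‖expA A t‖ := norm_mul₃_le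
    _ ≤ M * Real.exp (-ε * t) * ‖K‖ * (M * Real.exp (-ε * t)) := by gcongr
    _ = M ^ 2 * ‖K‖ * Real.exp (-(2 * ε) * t) := by
      rw [show -(2 * ε) * t = -ε * t + -ε * t by ring, Real.exp_add]; ring

variable (hε : 0 < ε)
include hε

theorem integrableOn_expA_mul_mul_expA {c : ℝ} (hc : 0 ≤ c) :
    IntegrableOn (fun t => expA A t * K * expA A t) (Ioi c) := by
  refine Integrable.mono' ((exp_neg_integrableOn_Ioi c (by positivity : 0 < 2 * ε)).const_mul
    (M ^ 2 * ‖K‖)) ?_ ?_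
  · exact (continuous_expA_mul_mul_expA A K).aestronglyMeasurable.restrict
  · filter_upwards [ae_restrict_mem measurableSet_Ioi] with t ht
    simpa [mul_assoc] using norm_expA_mul_mul_expA_le K hdecay (hc.trans (le_of_lt ht))

theorem tendsto_expA_mul_mul_expA_atTop :
    Tendsto (fun t => expA A t * K * expA A t) atTop (𝓝 0) := by
  have hexp : Tendsto (fun t : ℝ => Real.exp (-(2 * ε) * t)) atTop (𝓝 0) :=
    Real.tendsto_exp_atBot.comp (tendsto_id.const_mul_atTop_of_neg (by linarith))
  refine squeeze_zero_norm' ?_ (by simpa only [mul_zero] using hexp.const_mul (M ^ 2 * ‖K‖))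
  filter_upwards [eventually_ge_atTop 0] with t ht
  exact norm_expA_mul_mul_expA_le K hdecay ht

theorem lyapunov_Rop {x : ℝ} (hx : 0 ≤ x) :
    A * Rop A K x + Rop A K x * A = expA A x * K * expA A x := by
  have hint := integrableOn_expA_mul_mul_expA K hdecay hε hx
  have hint' : IntegrableOn (fun t => A * (expA A t * K * expA A t)
      + expA A t * K * expA A t * A) (Ioi x) :=
    (hint.const_mul A).add (hint.mul_const A)
  rw [Rop, ← integral_const_mul_of_integrable hint, ← integral_mul_const_of_integrable hint,
    ← integral_add (hint.const_mul A) (hint.mul_const A),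
    integral_Ioi_of_hasDerivAt_of_tendsto' (f := fun t => -(expA A t * K * expA A t))
      (fun t _ => (hasDerivAt_expA_mul_mul_expA A K t).fun_neg.congr_deriv (neg_neg _)) hint'
      (by simpa using (tendsto_expA_mul_mul_expA_atTop K hdecay hε).neg), zero_sub, neg_neg]

theorem hasDerivAt_Rop {x : ℝ} (hx : 0 < x) :
    HasDerivAt (Rop A K) (-(expA A x * K * expA A x)) x := by
  have hRop : ∀ᶠ y in 𝓝 x,
      Rop A K y = Rop A K 0 - ∫ t in (0 : ℝ)..y, expA A t * K * expA A t := by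
    filter_upwards [Ioi_mem_nhds hx] with y hy
    rw [Rop, Rop, ← intervalIntegral.integral_Ioi_sub_Ioi
      (integrableOn_expA_mul_mul_expA K hdecay hε le_rfl) (le_of_lt hy), sub_sub_cancel]
  have hderiv := ((continuous_expA_mul_mul_expA A K).integral_hasStrictDerivAt 0 x).hasDerivAt.const_sub (Rop A K 0)
  exact hderiv.congr_of_eventuallyEq hRop

theorem hasDerivAt_ringInverse_one_add_Rop {x : ℝ} (hx : 0 < x) (hu : IsUnit (1 + Rop A K x)) :
    HasDerivAt (fun y => Ring.inverse (1 + Rop A K y))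
      (Ring.inverse (1 + Rop A K x) * (expA A x * K * expA A x) * Ring.inverse (1 + Rop A K x))
      x :=
  (((hasDerivAt_Rop K hdecay hε hx).const_add 1).ringInverse hu).congr_deriv (by noncomm_ring)

end Decay

end Operators

theorem bracket_intertwines_derivation_general
    {H : Type*} [NormedAddCommGroup H] [InnerProductSpace ℂ H] [CompleteSpace H]
    (A : H →L[ℂ] H) (b : H) (C : H →L[ℂ] ℂ)
    (M ε : ℝ) (hε : 0 < ε)
    (hdecay : ∀ t : ℝ, 0 ≤ t → ‖expA A t‖ ≤ M * Real.exp (-ε * t))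
    (J : Set ℝ) (hJopen : IsOpen J) (hJsub : J ⊆ Set.Ioi (0 : ℝ))
    (hinv : ∀ x ∈ J, IsUnit (1 + Rop A (C.smulRight b) x))
    (F : ℝ → H →L[ℂ] H)
    (hF : ∀ x ∈ J, F x = Ring.inverse (1 + Rop A (C.smulRight b) x))
    (P P' : ℝ → H →L[ℂ] H)
    (hP : ∀ x ∈ J, HasDerivAt P (P' x) x) :
    ∀ x ∈ J,
      HasDerivAt (fun y : ℝ => C ((expA A y * F y * P y * F y * expA A y) b))
        (C ((expA A x * F x *
              (A * (1 - (2 : ℂ) • F x) * P x + P' x + P x * (1 - (2 : ℂ) • F x) * A) *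
              F x * expA A x) b)) x := by
  intro x hx
  have hx0 : 0 < x := hJsub hx
  have hu := hinv x hx
  have hFx := hF x hx
  have hFderiv : HasDerivAt F (F x * A * (1 - F x) + (1 - F x) * A * F x) x := by
    rw [← mul_mul_eq_of_lyapunov (lyapunov_Rop _ hdecay hε hx0.le)
      (hFx ▸ Ring.mul_inverse_cancel _ hu) (hFx ▸ Ring.inverse_mul_cancel _ hu), hFx]
    exact (hasDerivAt_ringInverse_one_add_Rop _ hdecay hε hx0 hu).congr_of_eventuallyEq
      (eventually_of_mem (hJopen.mem_nhds hx) hF)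
  have hprod := ((((hasDerivAt_expA A x).mul hFderiv).mul (hP x hx)).mul hFderiv).mul
    (hasDerivAt_expA A x)
  rw [two_smul, ← two_mul, ← leibniz_sandwich_eq (commute_expA A x)]
  exact ((C.comp (ContinuousLinearMap.apply ℂ H b)).restrictScalars ℝ).hasFDerivAt.comp_hasDerivAt
    x hprod

/-- With the rank-one operator `BC : v ↦ C(v)·b`, `R_x` as above, `F_x = (I + R_x)⁻¹` on an
open interval `J`, and a differentiable operator-valued function `P`, the scalar function
`β(x) = C(exp(−xA)·F_x·P(x)·F_x·exp(−xA)·b)` is differentiable on `J`, with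
`β′(x) = C(exp(−xA)·F_x·(A·(I − 2F_x)·P(x) + P′(x) + P(x)·(I − 2F_x)·A)·F_x·exp(−xA)·b)`:
the bracket intertwines `d/dx` with the derivation `∂P = A(I−2F)P + P' + P(I−2F)A`. -/
theorem bracket_intertwines_derivation
    {H : Type*} [NormedAddCommGroup H] [InnerProductSpace ℂ H] [CompleteSpace H]
    (A : H →L[ℂ] H) (b : H) (C : H →L[ℂ] ℂ)
    (M ε : ℝ) (hM : 0 < M) (hε : 0 < ε)
    (hdecay : ∀ t : ℝ, 0 ≤ t → ‖expA A t‖ ≤ M * Real.exp (-ε * t))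
    (J : Set ℝ) (hJopen : IsOpen J) (hJsub : J ⊆ Set.Ioi (0 : ℝ))
    (hinv : ∀ x ∈ J, IsUnit (1 + Rop A (C.smulRight b) x))
    (F : ℝ → H →L[ℂ] H)
    (hF : ∀ x ∈ J, F x = Ring.inverse (1 + Rop A (C.smulRight b) x))
    (P P' : ℝ → H →L[ℂ] H)
    (hP : ∀ x ∈ J, HasDerivAt P (P' x) x) :
    ∀ x ∈ J,
      HasDerivAt (fun y : ℝ => C ((expA A y * F y * P y * F y * expA A y) b))
        (C ((expA A x * F x *
              (A * (1 - (2 : ℂ) • F x) * P x + P' x + P x * (1 - (2 : ℂ) • F x) * A) *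
              F x * expA A x) b)) x :=
  bracket_intertwines_derivation_general A b C M ε hε hdecay J hJopen hJsub hinv F hF P P' hP
end

section
/- Let h : (0,∞) → ℝ be measurable and bounded with ∫₀^∞ h(y)²/y dy < ∞. Define φ(x,t) = ∫₀^∞ exp(−x·y − 2t/y)·h(y)² dy for x, t > 0. Then φ is well-defined, the mixed partial derivative ∂²φ/∂x∂t exists at every (x,t) with x, t > 0, and it satisfies ∂²φ/∂x∂t = 2·φ(x,t). -/
/-!
Differentiate twice under the integral sign. The kernel `k(x,t,y) = exp(−xy − 2t/y)`
satisfies `∂ₜk = −(2/y)·k` and `∂ₓ(−(2/y)·k) = 2k`, so everything hinges on domination.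
For `x ≥ a > 0` and `t ≥ b > 0` one has `k ≤ exp(−ay)` and, since `u·e^{−u} ≤ 1` with
`u = 2b/y`, `(2/y)·k ≤ exp(−ay)/b`; both bounds are integrable on `(0,∞)` and hold
uniformly on a neighbourhood of `(x,t)`.
-/
open MeasureTheory

/-- The scattering function `φ(x,t) = ∫₀^∞ exp(−xy − 2t/y)·h(y)² dy` of the linear
system associated with the Howland kernel. -/
noncomputable def phiSG (h : ℝ → ℝ) (x t : ℝ) : ℝ :=
  ∫ y in Set.Ioi (0 : ℝ), Real.exp (-(x * y) - 2 * t / y) * (h y) ^ 2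

open Set Metric Real

noncomputable def sgKernel (x t y : ℝ) : ℝ := exp (-(x * y) - 2 * t / y)

namespace sgKernel

lemma measurable (x t : ℝ) : Measurable (sgKernel x t) := by
  unfold sgKernel; fun_prop

lemma pos (x t y : ℝ) : 0 < sgKernel x t y := exp_pos _

lemma le_exp {a x t y : ℝ} (hy : 0 < y) (ha : a ≤ x) (ht : 0 ≤ t) :
    sgKernel x t y ≤ exp (-a * y) := by
  unfold sgKernel
  gcongr
  nlinarith [div_nonneg (mul_nonneg zero_le_two ht) hy.le]

lemma two_div_mul_le {a b x t y : ℝ} (hy : 0 < y) (ha : a ≤ x) (hb : 0 < b) (hbt : b ≤ t) :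
    2 / y * sgKernel x t y ≤ exp (-a * y) / b := by
  have hu : 2 * b / y * exp (-(2 * b / y)) ≤ 1 :=
    (mul_exp_neg_le_exp_neg_one _).trans (exp_le_one_iff.mpr (by norm_num))
  have hsplit : sgKernel x t y ≤ exp (-a * y) * exp (-(2 * b / y)) := by
    rw [sgKernel, ← exp_add]
    gcongr
    nlinarith [div_le_div_of_nonneg_right (mul_le_mul_of_nonneg_left hbt zero_le_two) hy.le]
  calc 2 / y * sgKernel x t y ≤ 2 / y * (exp (-a * y) * exp (-(2 * b / y))) := by gcongr
    _ = exp (-a * y) / b * (2 * b / y * exp (-(2 * b / y))) := by field_simp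
    _ ≤ exp (-a * y) / b := mul_le_of_le_one_right (by positivity) hu

lemma hasDerivAt_t (x t y : ℝ) :
    HasDerivAt (fun t' => sgKernel x t' y) (-2 / y * sgKernel x t y) t := by
  have hin : HasDerivAt (fun t' => -(x * y) - 2 * t' / y) (-2 / y) t := by
    simpa [neg_div] using (((hasDerivAt_id t).const_mul 2).div_const y).const_sub (-(x * y))
  exact hin.exp.congr_deriv (mul_comm _ _)

lemma hasDerivAt_x (x t y : ℝ) :
    HasDerivAt (fun x' => sgKernel x' t y) (-y * sgKernel x t y) x := by
  have hin : HasDerivAt (fun x' => -(x' * y) - 2 * t / y) (-y) x := by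
    simpa using (((hasDerivAt_id x).mul_const y).neg).sub_const (2 * t / y)
  exact hin.exp.congr_deriv (mul_comm _ _)

end sgKernel

section Weighted

variable {w : ℝ → ℝ} {M : ℝ}

lemma norm_sgKernel_mul_le (hM : ∀ y, 0 < y → |w y| ≤ M) {a x t y : ℝ} (hy : 0 < y)
    (ha : a ≤ x) (ht : 0 ≤ t) : ‖sgKernel x t y * w y‖ ≤ M * exp (-a * y) := by
  rw [norm_mul, Real.norm_of_nonneg (sgKernel.pos x t y).le, Real.norm_eq_abs, mul_comm]
  exact mul_le_mul (hM y hy) (sgKernel.le_exp hy ha ht) (sgKernel.pos x t y).le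
    ((abs_nonneg _).trans (hM y hy))

lemma norm_div_mul_sgKernel_mul_le (hM : ∀ y, 0 < y → |w y| ≤ M) {a b x t y : ℝ}
    (hy : 0 < y) (ha : a ≤ x) (hb : 0 < b) (hbt : b ≤ t) :
    ‖-2 / y * sgKernel x t y * w y‖ ≤ M / b * exp (-a * y) := by
  have hpos : 0 ≤ 2 / y * sgKernel x t y := by have := sgKernel.pos x t y; positivity
  calc ‖-2 / y * sgKernel x t y * w y‖ = 2 / y * sgKernel x t y * |w y| := by
        rw [neg_div, neg_mul, neg_mul, norm_neg, norm_mul, Real.norm_of_nonneg hpos,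
          Real.norm_eq_abs]
    _ ≤ exp (-a * y) / b * M := mul_le_mul (sgKernel.two_div_mul_le hy ha hb hbt) (hM y hy)
        (abs_nonneg _) (by positivity)
    _ = M / b * exp (-a * y) := by ring

lemma measurable_div_mul_sgKernel_mul (hw : Measurable w) (x t : ℝ) :
    Measurable fun y => -2 / y * sgKernel x t y * w y :=
  ((measurable_const.div measurable_id).mul (sgKernel.measurable x t)).mul hw

lemma integrableOn_sgKernel_mul (hw : Measurable w) (hM : ∀ y, 0 < y → |w y| ≤ M) {x t : ℝ}
    (hx : 0 < x) (ht : 0 ≤ t) : IntegrableOn (fun y => sgKernel x t y * w y) (Ioi 0) := by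
  refine ((exp_neg_integrableOn_Ioi 0 hx).const_mul M).mono'
    ((sgKernel.measurable x t).mul hw).aestronglyMeasurable ?_
  filter_upwards [ae_restrict_mem measurableSet_Ioi] with y hy
  exact norm_sgKernel_mul_le hM hy le_rfl ht

lemma hasDerivAt_integral_sgKernel_mul_t (hw : Measurable w) (hM : ∀ y, 0 < y → |w y| ≤ M)
    {x t : ℝ} (hx : 0 < x) (ht : 0 < t) :
    HasDerivAt (fun t' => ∫ y in Ioi 0, sgKernel x t' y * w y)
      (∫ y in Ioi 0, -2 / y * sgKernel x t y * w y) t := by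
  have hmeas (t' : ℝ) : AEStronglyMeasurable (fun y => sgKernel x t' y * w y)
      (volume.restrict (Ioi 0)) := ((sgKernel.measurable x t').mul hw).aestronglyMeasurable
  refine (hasDerivAt_integral_of_dominated_loc_of_deriv_le
    (F' := fun t' y => -2 / y * sgKernel x t' y * w y) (ball_mem_nhds t (half_pos ht))
    (.of_forall hmeas) (integrableOn_sgKernel_mul hw hM hx ht.le)
    (measurable_div_mul_sgKernel_mul hw x t).aestronglyMeasurable
    ?_ ((exp_neg_integrableOn_Ioi 0 hx).const_mul (M / (t / 2))) ?_).2
  · filter_upwards [ae_restrict_mem measurableSet_Ioi] with y hy t' ht'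
    have ht't : t / 2 ≤ t' := by
      linarith [(abs_lt.mp (mem_ball_iff_norm.mp ht')).1]
    exact norm_div_mul_sgKernel_mul_le hM hy le_rfl (half_pos ht) ht't
  · exact .of_forall fun y t' _ => (sgKernel.hasDerivAt_t x t' y).mul_const (w y)

lemma hasDerivAt_integral_div_mul_sgKernel_mul_x (hw : Measurable w)
    (hM : ∀ y, 0 < y → |w y| ≤ M) {x t : ℝ} (hx : 0 < x) (ht : 0 < t) :
    HasDerivAt (fun x' => ∫ y in Ioi 0, -2 / y * sgKernel x' t y * w y)
      (2 * ∫ y in Ioi 0, sgKernel x t y * w y) x := by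
  have hmeas (x' : ℝ) : AEStronglyMeasurable (fun y => -2 / y * sgKernel x' t y * w y)
      (volume.restrict (Ioi 0)) := (measurable_div_mul_sgKernel_mul hw x' t).aestronglyMeasurable
  have hF_int : IntegrableOn (fun y => -2 / y * sgKernel x t y * w y) (Ioi 0) := by
    refine ((exp_neg_integrableOn_Ioi 0 hx).const_mul (M / t)).mono' (hmeas x) ?_
    filter_upwards [ae_restrict_mem measurableSet_Ioi] with y hy
    exact norm_div_mul_sgKernel_mul_le hM hy le_rfl ht le_rfl
  rw [← integral_const_mul]
  refine (hasDerivAt_integral_of_dominated_loc_of_deriv_le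
    (F' := fun x' y => 2 * (sgKernel x' t y * w y)) (ball_mem_nhds x (half_pos hx))
    (.of_forall hmeas) hF_int
    (((sgKernel.measurable x t).mul hw).const_mul 2).aestronglyMeasurable
    ?_ ((exp_neg_integrableOn_Ioi 0 (half_pos hx)).const_mul (2 * M)) ?_).2
  · filter_upwards [ae_restrict_mem measurableSet_Ioi] with y hy x' hx'
    have hx'x : x / 2 ≤ x' := by
      linarith [(abs_lt.mp (mem_ball_iff_norm.mp hx')).1]
    rw [norm_mul, Real.norm_two, mul_assoc]
    exact mul_le_mul_of_nonneg_left (norm_sgKernel_mul_le hM hy hx'x ht.le) zero_le_two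
  · filter_upwards [ae_restrict_mem measurableSet_Ioi] with y (hy : 0 < y) x' _
    refine (((sgKernel.hasDerivAt_x x' t y).const_mul (-2 / y)).mul_const (w y)).congr_deriv ?_
    field_simp

end Weighted

theorem sinh_gordon_linear_counterpart_general
    (h : ℝ → ℝ) (hmeas : Measurable h) (hbdd : ∃ K : ℝ, ∀ y : ℝ, 0 < y → |h y| ≤ K) :
    (∀ x t : ℝ, 0 < x → 0 < t →
      IntegrableOn (fun y : ℝ => Real.exp (-(x * y) - 2 * t / y) * (h y) ^ 2)
        (Set.Ioi (0 : ℝ))) ∧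
    ∃ φt : ℝ → ℝ → ℝ,
      (∀ x t : ℝ, 0 < x → 0 < t →
        HasDerivAt (fun t' : ℝ => phiSG h x t') (φt x t) t) ∧
      (∀ x t : ℝ, 0 < x → 0 < t →
        HasDerivAt (fun x' : ℝ => φt x' t) (2 * phiSG h x t) x) := by
  obtain ⟨K, hK⟩ := hbdd
  have hw : Measurable fun y => h y ^ 2 := hmeas.pow_const 2
  have hwK (y : ℝ) (hy : 0 < y) : |h y ^ 2| ≤ K ^ 2 := by
    rw [abs_pow]
    exact pow_le_pow_left₀ (abs_nonneg _) (hK y hy) 2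
  exact ⟨fun x t hx ht => integrableOn_sgKernel_mul hw hwK hx ht.le,
    fun x t => ∫ y in Ioi 0, -2 / y * sgKernel x t y * h y ^ 2,
    fun x t hx ht => hasDerivAt_integral_sgKernel_mul_t hw hwK hx ht,
    fun x t hx ht => hasDerivAt_integral_div_mul_sgKernel_mul_x hw hwK hx ht⟩

/-- For bounded measurable `h : (0,∞) → ℝ` with `∫₀^∞ h(y)²/y dy < ∞`, the scattering
function `φ(x,t) = ∫₀^∞ exp(−xy − 2t/y)·h(y)² dy` is well-defined for `x, t > 0`, its
mixed partial derivative `∂²φ/∂x∂t` exists, and `∂²φ/∂x∂t = 2φ`: the linear counterpart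
of the sinh-Gordon equation. -/
theorem sinh_gordon_linear_counterpart
    (h : ℝ → ℝ) (hmeas : Measurable h) (hbdd : ∃ K : ℝ, ∀ y : ℝ, 0 < y → |h y| ≤ K)
    (hint : IntegrableOn (fun y : ℝ => (h y) ^ 2 / y) (Set.Ioi (0 : ℝ))) :
    (∀ x t : ℝ, 0 < x → 0 < t →
      IntegrableOn (fun y : ℝ => Real.exp (-(x * y) - 2 * t / y) * (h y) ^ 2)
        (Set.Ioi (0 : ℝ))) ∧
    ∃ φt : ℝ → ℝ → ℝ,
      (∀ x t : ℝ, 0 < x → 0 < t →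
        HasDerivAt (fun t' : ℝ => phiSG h x t') (φt x t) t) ∧
      (∀ x t : ℝ, 0 < x → 0 < t →
        HasDerivAt (fun x' : ℝ => φt x' t) (2 * phiSG h x t) x) :=
  sinh_gordon_linear_counterpart_general h hmeas hbdd
end

section
/- Let h : (0,∞) → ℝ be measurable and bounded with ∫₀^∞ h(y)²/y dy < ∞, fix t > 0, and let φ(x,t) = ∫₀^∞ exp(−x·y − 2t/y)·h(y)² dy. Then for every x₀ > 0 the integral ∫₀^∞ x·φ(x + 2x₀, t)² dx is finite, and it tends to 0 as x₀ → ∞. -/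
open MeasureTheory

/-!
By AM-GM, `x * y / 2 + 2 * t / y ≥ 2 * √(t * x)`, and `exp (-(x * y / 2)) ≤ 2 / (x * y)`, so the
kernel of `φ` is at most `(2 / x) * exp (-2 * √(t * x)) * y⁻¹` and
`φ(x, t) ≤ (2 / x) * exp (-2 * √(t * x)) * A`, where `A = ∫₀^∞ h(y)² / y dy`.
Since `8 * x * x₀ ≤ (x + 2 * x₀)²`, this gives
`x * φ(x + 2 * x₀, t)² ≤ A² / (2 * x₀) * exp (-4 * √(t * x))`, an integrable function of `x`
whose integral is `O(1 / x₀)`.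
-/

open Real Set Filter

lemma exp_neg_le_inv {u : ℝ} (hu : 0 < u) : exp (-u) ≤ u⁻¹ := by
  rw [exp_neg]
  exact inv_anti₀ hu (by linarith [add_one_le_exp u])

lemma two_mul_sqrt_mul_sqrt_le {t x y : ℝ} (ht : 0 ≤ t) (hx : 0 ≤ x) (hy : 0 < y) :
    2 * √t * √x ≤ x * y / 2 + 2 * t / y := by
  have hamgm := two_mul_le_add_sq √(x * y / 2) √(2 * t / y)
  have hprod : √(x * y / 2) * √(2 * t / y) = √t * √x := by
    rw [← sqrt_mul (by positivity), ← sqrt_mul ht]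
    congr 1
    field_simp
  rw [sq_sqrt (by positivity), sq_sqrt (by positivity), mul_assoc, hprod] at hamgm
  linarith

lemma exp_neg_mul_sub_div_le {t x y : ℝ} (ht : 0 ≤ t) (hx : 0 < x) (hy : 0 < y) :
    exp (-(x * y) - 2 * t / y) ≤ 2 / x * exp (-(2 * √t * √x)) * y⁻¹ := by
  calc exp (-(x * y) - 2 * t / y) ≤ exp (-(x * y / 2)) * exp (-(2 * √t * √x)) := by
        rw [← exp_add]
        gcongr
        linarith [two_mul_sqrt_mul_sqrt_le ht hx.le hy]
    _ ≤ (x * y / 2)⁻¹ * exp (-(2 * √t * √x)) := by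
        gcongr
        exact exp_neg_le_inv (by positivity)
    _ = 2 / x * exp (-(2 * √t * √x)) * y⁻¹ := by
        field_simp

lemma integrableOn_exp_neg_mul_sqrt {b : ℝ} (hb : 0 < b) :
    IntegrableOn (fun x : ℝ => exp (-(b * √x))) (Ioi 0) := by
  refine (integrableOn_rpow_mul_exp_neg_mul_rpow (s := 0) (p := 1 / 2) (by norm_num)
    (by norm_num) hb).congr_fun (fun x _ => ?_) measurableSet_Ioi
  simp [sqrt_eq_rpow]

lemma phiSG_nonneg (h : ℝ → ℝ) (x t : ℝ) : 0 ≤ phiSG h x t :=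
  setIntegral_nonneg measurableSet_Ioi fun _ _ => by positivity

lemma measurable_phiSG {h : ℝ → ℝ} (hmeas : Measurable h) (t : ℝ) :
    Measurable fun x => phiSG h x t :=
  (by fun_prop : Measurable fun p : ℝ × ℝ =>
    exp (-(p.1 * p.2) - 2 * t / p.2) * h p.2 ^ 2).stronglyMeasurable.integral_prod_right'.measurable

lemma phiSG_le {h : ℝ → ℝ} (hint : IntegrableOn (fun y => h y ^ 2 / y) (Ioi 0))
    {t x : ℝ} (ht : 0 ≤ t) (hx : 0 < x) :
    phiSG h x t ≤ 2 / x * exp (-(2 * √t * √x)) * ∫ y in Ioi 0, h y ^ 2 / y := by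
  rw [← integral_const_mul]
  refine integral_mono_of_nonneg (Eventually.of_forall fun _ => by positivity)
    (hint.const_mul _) ?_
  filter_upwards [ae_restrict_mem measurableSet_Ioi] with y hy
  calc exp (-(x * y) - 2 * t / y) * h y ^ 2
      ≤ 2 / x * exp (-(2 * √t * √x)) * y⁻¹ * h y ^ 2 := by
        gcongr
        exact exp_neg_mul_sub_div_le ht hx hy
    _ = 2 / x * exp (-(2 * √t * √x)) * (h y ^ 2 / y) := by ring

lemma mul_phiSG_shift_sq_le {h : ℝ → ℝ} (hint : IntegrableOn (fun y => h y ^ 2 / y) (Ioi 0))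
    {t x₀ x : ℝ} (ht : 0 ≤ t) (hx₀ : 0 < x₀) (hx : 0 < x) :
    x * phiSG h (x + 2 * x₀) t ^ 2 ≤
      (∫ y in Ioi 0, h y ^ 2 / y) ^ 2 / (2 * x₀) * exp (-(4 * √t * √x)) := by
  set A := ∫ y in Ioi 0, h y ^ 2 / y
  set X := x + 2 * x₀ with hX_def
  have hX : 0 < X := by positivity
  clear_value X
  have hweight : 4 * x / X ^ 2 ≤ 1 / (2 * x₀) := by
    rw [div_le_div_iff₀ (by positivity) (by positivity)]
    nlinarith [sq_nonneg (x - 2 * x₀)]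
  have hdecay : exp (-(2 * √t * √X)) ^ 2 ≤ exp (-(4 * √t * √x)) := by
    rw [sq, ← exp_add]
    gcongr
    nlinarith [sqrt_le_sqrt (by linarith : x ≤ X), sqrt_nonneg t]
  calc x * phiSG h X t ^ 2 ≤ x * (2 / X * exp (-(2 * √t * √X)) * A) ^ 2 :=
        mul_le_mul_of_nonneg_left (pow_le_pow_left₀ (phiSG_nonneg h X t) (phiSG_le hint ht hX) 2)
          hx.le
    _ = 4 * x / X ^ 2 * exp (-(2 * √t * √X)) ^ 2 * A ^ 2 := by ring
    _ ≤ 1 / (2 * x₀) * exp (-(4 * √t * √x)) * A ^ 2 := by gcongr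
    _ = A ^ 2 / (2 * x₀) * exp (-(4 * √t * √x)) := by ring

theorem shifted_hankel_hilbert_schmidt_norm_general
    (h : ℝ → ℝ) (hmeas : Measurable h)
    (hint : IntegrableOn (fun y : ℝ => (h y) ^ 2 / y) (Set.Ioi (0 : ℝ)))
    (t : ℝ) (ht : 0 < t) :
    (∀ x₀ : ℝ, 0 < x₀ →
      IntegrableOn (fun x : ℝ => x * (phiSG h (x + 2 * x₀) t) ^ 2) (Set.Ioi (0 : ℝ))) ∧
    Filter.Tendsto
      (fun x₀ : ℝ => ∫ x in Set.Ioi (0 : ℝ), x * (phiSG h (x + 2 * x₀) t) ^ 2)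
      Filter.atTop (nhds 0) := by
  set A := ∫ y in Ioi 0, h y ^ 2 / y
  have hdom := integrableOn_exp_neg_mul_sqrt (b := 4 * √t) (by positivity)
  have hbound : ∀ x₀ : ℝ, 0 < x₀ → ∀ᵐ x ∂volume.restrict (Ioi 0),
      ‖x * phiSG h (x + 2 * x₀) t ^ 2‖ ≤ A ^ 2 / (2 * x₀) * exp (-(4 * √t * √x)) := by
    intro x₀ hx₀
    filter_upwards [ae_restrict_mem measurableSet_Ioi] with x hx
    rw [norm_of_nonneg (mul_nonneg (le_of_lt hx) (sq_nonneg _))]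
    exact mul_phiSG_shift_sq_le hint ht.le hx₀ hx
  have hphi := measurable_phiSG hmeas t
  refine ⟨fun x₀ hx₀ => (hdom.const_mul _).mono' (Measurable.aestronglyMeasurable (by fun_prop))
    (hbound x₀ hx₀), ?_⟩
  have hrate : Tendsto (fun x₀ : ℝ => A ^ 2 / (2 * x₀) * ∫ x in Ioi 0, exp (-(4 * √t * √x)))
      atTop (nhds 0) := by
    simpa using (tendsto_const_nhds.div_atTop
      (tendsto_id.const_mul_atTop (two_pos : (0 : ℝ) < 2))).mul_const _
  refine squeeze_zero_norm' ?_ hrate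
  filter_upwards [eventually_gt_atTop 0] with x₀ hx₀
  rw [← integral_const_mul]
  exact norm_integral_le_of_norm_le (hdom.const_mul _) (hbound x₀ hx₀)

/-- For bounded measurable `h : (0,∞) → ℝ` with `∫₀^∞ h(y)²/y dy < ∞` and fixed `t > 0`,
the squared Hilbert–Schmidt norm `∫₀^∞ x·φ(x+2x₀,t)² dx` of the shifted Hankel operator
is finite for every `x₀ > 0`, and tends to `0` as `x₀ → ∞`. -/
theorem shifted_hankel_hilbert_schmidt_norm
    (h : ℝ → ℝ) (hmeas : Measurable h) (hbdd : ∃ K : ℝ, ∀ y : ℝ, 0 < y → |h y| ≤ K)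
    (hint : IntegrableOn (fun y : ℝ => (h y) ^ 2 / y) (Set.Ioi (0 : ℝ)))
    (t : ℝ) (ht : 0 < t) :
    (∀ x₀ : ℝ, 0 < x₀ →
      IntegrableOn (fun x : ℝ => x * (phiSG h (x + 2 * x₀) t) ^ 2) (Set.Ioi (0 : ℝ))) ∧
    Filter.Tendsto
      (fun x₀ : ℝ => ∫ x in Set.Ioi (0 : ℝ), x * (phiSG h (x + 2 * x₀) t) ^ 2)
      Filter.atTop (nhds 0) :=
  shifted_hankel_hilbert_schmidt_norm_general h hmeas hint t ht
end

section
/- Define K₁(t) = ∫₀^∞ exp(−t·cosh u)·cosh u du for t > 0. Then for every t > 0: e^{−t}/t ≤ K₁(t) ≤ √(π/(2t))·e^{−t} + e^{−t}/t. -/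
open MeasureTheory

/-- MacDonald's function of order 1, `K₁(t) = ∫₀^∞ exp(−t·cosh u)·cosh u du`. -/
noncomputable def K1 (t : ℝ) : ℝ :=
  ∫ u in Set.Ioi (0 : ℝ), Real.exp (-t * Real.cosh u) * Real.cosh u

/-!
Split `cosh u = sinh u + e^{-u}`. The `sinh` part is an exact derivative,
`exp (-t cosh u) sinh u = d/du (-exp (-t cosh u) / t)`, and integrates to `e^{-t}/t`.
The remaining part is nonnegative, and `cosh u ≥ 1 + u²/2` together with `e^{-u} ≤ 1`
bounds it by the half-line Gaussian integral
`e^{-t} ∫₀^∞ e^{-t u²/2} du = √(π/(2t)) e^{-t}`.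
-/

open Real Set Filter Topology

lemma Real.one_add_sq_div_two_le_cosh (u : ℝ) : 1 + u ^ 2 / 2 ≤ cosh u := by
  have half_le : |u / 2| ≤ |sinh (u / 2)| := by
    rw [abs_sinh]; exact self_le_sinh_iff.mpr (abs_nonneg _)
  have half_angle : cosh u = 1 + 2 * sinh (u / 2) ^ 2 := by
    have double := cosh_two_mul (u / 2)
    rw [mul_div_cancel₀ u two_ne_zero] at double
    linarith [cosh_sq (u / 2)]
  nlinarith [sq_le_sq.mpr half_le]

lemma Real.tendsto_cosh_atTop : Tendsto cosh atTop atTop :=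
  tendsto_atTop_mono (fun u => by rw [cosh_eq]; linarith [exp_pos (-u)])
    (tendsto_exp_atTop.atTop_div_const two_pos)

section

variable {t : ℝ}

lemma hasDerivAt_neg_exp_neg_mul_cosh_div (ht : t ≠ 0) (u : ℝ) :
    HasDerivAt (fun u => -exp (-t * cosh u) / t) (exp (-t * cosh u) * sinh u) u := by
  refine (((hasDerivAt_cosh u).const_mul (-t)).exp.neg.div_const t).congr_deriv ?_
  field_simp

lemma tendsto_exp_neg_mul_cosh_atTop (ht : 0 < t) :
    Tendsto (fun u => exp (-t * cosh u)) atTop (𝓝 0) := by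
  simp_rw [neg_mul]
  exact tendsto_exp_atBot.comp
    (tendsto_neg_atTop_atBot.comp (tendsto_cosh_atTop.const_mul_atTop ht))

lemma integrableOn_exp_neg_mul_cosh_mul_sinh (ht : 0 < t) :
    IntegrableOn (fun u => exp (-t * cosh u) * sinh u) (Ioi 0) :=
  integrableOn_Ioi_deriv_of_nonneg' (fun u _ => hasDerivAt_neg_exp_neg_mul_cosh_div ht.ne' u)
    (fun _ hu => mul_nonneg (exp_pos _).le (sinh_nonneg_iff.mpr (le_of_lt hu)))
    ((tendsto_exp_neg_mul_cosh_atTop ht).neg.div_const t)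

lemma integral_exp_neg_mul_cosh_mul_sinh (ht : 0 < t) :
    ∫ u in Ioi (0 : ℝ), exp (-t * cosh u) * sinh u = exp (-t) / t := by
  rw [integral_Ioi_of_hasDerivAt_of_tendsto'
    (fun u _ => hasDerivAt_neg_exp_neg_mul_cosh_div ht.ne' u)
    (integrableOn_exp_neg_mul_cosh_mul_sinh ht)
    ((tendsto_exp_neg_mul_cosh_atTop ht).neg.div_const t)]
  simp [neg_div]

lemma exp_neg_mul_cosh_le (ht : 0 ≤ t) (u : ℝ) :
    exp (-t * cosh u) ≤ exp (-t) * exp (-(t / 2) * u ^ 2) := by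
  rw [← exp_add, exp_le_exp]
  nlinarith [one_add_sq_div_two_le_cosh u]

lemma exp_neg_mul_cosh_mul_exp_neg_le (ht : 0 ≤ t) {u : ℝ} (hu : 0 ≤ u) :
    exp (-t * cosh u) * exp (-u) ≤ exp (-t) * exp (-(t / 2) * u ^ 2) :=
  calc exp (-t * cosh u) * exp (-u) ≤ exp (-t * cosh u) :=
        mul_le_of_le_one_right (exp_pos _).le (exp_le_one_iff.mpr (neg_nonpos.mpr hu))
    _ ≤ exp (-t) * exp (-(t / 2) * u ^ 2) := exp_neg_mul_cosh_le ht u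

lemma integrableOn_exp_neg_mul_cosh_mul_exp_neg (ht : 0 < t) :
    IntegrableOn (fun u => exp (-t * cosh u) * exp (-u)) (Ioi 0) := by
  refine Integrable.mono'
    ((integrable_exp_neg_mul_sq (half_pos ht)).const_mul (exp (-t))).integrableOn
    (by fun_prop) ?_
  filter_upwards [ae_restrict_mem measurableSet_Ioi] with u hu
  rw [Real.norm_of_nonneg (by positivity)]
  exact exp_neg_mul_cosh_mul_exp_neg_le ht.le (le_of_lt hu)

lemma integral_exp_neg_mul_cosh_mul_exp_neg_le (ht : 0 < t) :
    ∫ u in Ioi (0 : ℝ), exp (-t * cosh u) * exp (-u) ≤ √(π / (2 * t)) * exp (-t) :=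
  calc ∫ u in Ioi (0 : ℝ), exp (-t * cosh u) * exp (-u)
      ≤ ∫ u in Ioi (0 : ℝ), exp (-t) * exp (-(t / 2) * u ^ 2) :=
        setIntegral_mono_on (integrableOn_exp_neg_mul_cosh_mul_exp_neg ht)
          ((integrable_exp_neg_mul_sq (half_pos ht)).const_mul (exp (-t))).integrableOn
          measurableSet_Ioi
          fun u hu => exp_neg_mul_cosh_mul_exp_neg_le ht.le (le_of_lt hu)
    _ = √(π / (2 * t)) * exp (-t) := by
        rw [integral_const_mul, integral_gaussian_Ioi,
          show π / (t / 2) = 2 ^ 2 * (π / (2 * t)) by field_simp,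
          sqrt_mul (by norm_num), sqrt_sq (by norm_num)]
        ring

lemma K1_eq_exp_neg_div_add_integral (ht : 0 < t) :
    K1 t = exp (-t) / t + ∫ u in Ioi (0 : ℝ), exp (-t * cosh u) * exp (-u) := by
  rw [← integral_exp_neg_mul_cosh_mul_sinh ht, ← integral_add
    (integrableOn_exp_neg_mul_cosh_mul_sinh ht) (integrableOn_exp_neg_mul_cosh_mul_exp_neg ht)]
  refine integral_congr_ae (ae_of_all _ fun u => ?_)
  simp only [← mul_add, ← cosh_sub_sinh, add_sub_cancel]

end

/-- For every `t > 0`: `e^{−t}/t ≤ K₁(t) ≤ √(π/(2t))·e^{−t} + e^{−t}/t`. -/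
theorem K1_bounds (t : ℝ) (ht : 0 < t) :
    Real.exp (-t) / t ≤ K1 t ∧
    K1 t ≤ Real.sqrt (Real.pi / (2 * t)) * Real.exp (-t) + Real.exp (-t) / t := by
  have remainder_nonneg : 0 ≤ ∫ u in Ioi (0 : ℝ), exp (-t * cosh u) * exp (-u) :=
    setIntegral_nonneg measurableSet_Ioi fun _ _ => by positivity
  have remainder_le := integral_exp_neg_mul_cosh_mul_exp_neg_le ht
  rw [K1_eq_exp_neg_div_add_integral ht]
  constructor <;> linarith
end

section
/- Let α > 0 be a real number and n ≥ 1 an integer. Then the n×n Hankel determinant of Gamma values satisfies det[ Γ(α + j + k + 1) ]_{j,k=0}^{n−1} = ∏_{j=0}^{n−1} ( j! · Γ(α + j + 1) ). -/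
open Polynomial Finset

lemma gamma_add_nat (x : ℝ) (hx : 0 < x) (j : ℕ) :
    Real.Gamma (x + j) = Real.Gamma x * (ascPochhammer ℝ j).eval x := by
  induction j with
  | zero => simp
  | succ j ih =>
    have h1 : x + (j + 1 : ℕ) = (x + j) + 1 := by push_cast; ring
    have h2 : (x + j) ≠ 0 := by positivity
    rw [h1, Real.Gamma_add_one h2, ih, ascPochhammer_succ_right]
    simp [Polynomial.eval_mul]
    ring

lemma prod_range_sub_cast (j : ℕ) :
    ∏ i ∈ Finset.range j, ((j : ℝ) - i) = j.factorial := by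
  induction j with
  | zero => simp
  | succ j ih =>
    rw [Finset.prod_range_succ']
    have : ∀ k ∈ Finset.range j, (((j+1:ℕ)):ℝ) - ((k+1:ℕ):ℝ) = (j:ℝ) - k := by
      intro k _; push_cast; ring
    rw [Finset.prod_congr rfl this, ih]
    push_cast [Nat.factorial_succ]
    ring

/-- For real `α > 0` and `n ≥ 1`, the `n×n` Hankel determinant of Gamma values satisfies
`det[Γ(α + j + k + 1)]_{j,k=0}^{n−1} = ∏_{j=0}^{n−1} (j! · Γ(α + j + 1))`. -/
theorem hankel_determinant_gamma (α : ℝ) (hα : 0 < α) (n : ℕ) (hn : 1 ≤ n) :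
    Matrix.det (Matrix.of fun j k : Fin n => Real.Gamma (α + (j : ℕ) + (k : ℕ) + 1))
      = ∏ j : Fin n, ((j : ℕ).factorial * Real.Gamma (α + (j : ℕ) + 1)) := by
  set v : Fin n → ℝ := fun k => α + (k : ℕ) + 1 with hv
  set p : Fin n → ℝ[X] := fun j => ascPochhammer ℝ (j : ℕ) with hp
  have hentry : ∀ j k : Fin n,
      Real.Gamma (α + (j : ℕ) + (k : ℕ) + 1)
        = ((p j).eval (v k)) * Real.Gamma (v k) := by
    intro j k
    have hvk : 0 < v k := by simp only [hv]; positivity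
    have : α + (j : ℕ) + (k : ℕ) + 1 = v k + (j : ℕ) := by simp only [hv]; ring
    rw [this, gamma_add_nat _ hvk]
    ring
  have hM : (Matrix.of fun j k : Fin n => Real.Gamma (α + (j : ℕ) + (k : ℕ) + 1))
      = (Matrix.of fun j k : Fin n => (p k).eval (v j)).transpose
        * Matrix.diagonal (fun k => Real.Gamma (v k)) := by
    ext j k
    simp [Matrix.mul_apply, Matrix.diagonal, hentry j k]
  rw [hM, Matrix.det_mul, Matrix.det_transpose,
      ← Matrix.det_eval_matrixOfPolynomials_eq_det_vandermonde v p
        (fun i => ascPochhammer_natDegree ℝ (i : ℕ)) (fun i => monic_ascPochhammer ℝ (i : ℕ)),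
      Matrix.det_vandermonde, Matrix.det_diagonal]
  have hswap : ∏ i : Fin n, ∏ j ∈ Finset.Ioi i, (v j - v i)
      = ∏ j : Fin n, ∏ i ∈ Finset.Iio j, (v j - v i) := by
    refine Finset.prod_comm' ?_
    intro i j
    simp [Finset.mem_Ioi, Finset.mem_Iio]
  have hvand : ∀ j : Fin n, ∏ i ∈ Finset.Iio j, (v j - v i) = ((j : ℕ).factorial : ℝ) := by
    intro j
    have h1 : ∀ i ∈ Finset.Iio j, v j - v i = ((j : ℕ) : ℝ) - ((i : ℕ) : ℝ) := by
      intro i _; simp only [hv]; ring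
    rw [Finset.prod_congr rfl h1, ← prod_range_sub_cast (j : ℕ)]
    refine Finset.prod_bij (fun i _ => (i : ℕ)) ?_ ?_ ?_ ?_
    · intro i hi; exact Finset.mem_range.mpr (Fin.lt_def.mp (Finset.mem_Iio.mp hi))
    · intro a ha b hb h; exact Fin.ext h
    · intro m hm
      simp only [Finset.mem_range] at hm
      exact ⟨⟨m, hm.trans j.2⟩, Finset.mem_Iio.mpr (Fin.lt_def.mpr hm), rfl⟩
    · intro i hi; rfl
  rw [hswap, ← Finset.prod_mul_distrib]
  apply Finset.prod_congr rfl
  intro j _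
  rw [hvand j]
end
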